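/- Hyperregular Legendre duality, converse direction: let V be a finite-dimensional real vector space, L : V → ℝ smooth with fiber derivative dL : V → V* a diffeomorphism, and define H : V* → ℝ by H(p) = −(⟨p, a⟩ − L(a)) where a = (dL)⁻¹(p). Then H is differentiable and dH(p) = −a, i.e. dH = −(dL)⁻¹. -/

import Mathlib

/-- Hyperregular Legendre duality, converse direction. Let `V` be
a finite-dimensional real vector space, `L : V → ℝ` smooth with fiber derivative
`dL : V → V*` (i.e. `fderiv ℝ L a = dL a`) a diffeomorphism with smooth inverse
`e : V* → V`, and define `H(p) = −(⟨p, a⟩ − L(a))` with `a = e p = (dL)⁻¹(p)`.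
Then `H` is differentiable and `dH(p) = −a`, i.e. `dH = −(dL)⁻¹`; identifying
the derivative of `H` at `p` with an element of `V` via `V** ≅ V`, this reads
`fderiv ℝ H p ν = ν (−(e p))`. -/
theorem hyperregular_legendre_transform_converse
    {V : Type*} [NormedAddCommGroup V] [NormedSpace ℝ V] [FiniteDimensional ℝ V]
    (L : V → ℝ) (hL : ContDiff ℝ (⊤ : ℕ∞) L)
    (dL : V → (V →L[ℝ] ℝ))
    (hdL : ∀ a : V, fderiv ℝ L a = dL a)
    (e : (V →L[ℝ] ℝ) → V) (he : ContDiff ℝ (⊤ : ℕ∞) e)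
    (hleft : ∀ a : V, e (dL a) = a)
    (hright : ∀ p : V →L[ℝ] ℝ, dL (e p) = p)
    (H : (V →L[ℝ] ℝ) → ℝ) (hH : ∀ p : V →L[ℝ] ℝ, H p = -((p (e p)) - L (e p))) :
    ∀ p : V →L[ℝ] ℝ, DifferentiableAt ℝ H p ∧
      ∀ ν : V →L[ℝ] ℝ, fderiv ℝ H p ν = ν (-(e p)) := by
  intro p
  have heD : HasFDerivAt e (fderiv ℝ e p) p :=
    (he.differentiable (by simp) p).hasFDerivAt
  have hLd : HasFDerivAt L (dL (e p)) (e p) := by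
    rw [← hdL]; exact (hL.differentiable (by simp) (e p)).hasFDerivAt
  have h1 : HasFDerivAt (fun q => L (e q)) ((dL (e p)).comp (fderiv ℝ e p)) p :=
    hLd.comp p heD
  have hid : HasFDerivAt (fun q : V →L[ℝ] ℝ => q)
      (ContinuousLinearMap.id ℝ (V →L[ℝ] ℝ)) p := hasFDerivAt_id p
  have h2 := hid.clm_apply heD
  have hHeq : H = fun q : V →L[ℝ] ℝ => -(q (e q) - L (e q)) := funext hH
  have h3 : HasFDerivAt H
      (-((p.comp (fderiv ℝ e p) +
        (ContinuousLinearMap.id ℝ (V →L[ℝ] ℝ)).flip (e p)) -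
        (dL (e p)).comp (fderiv ℝ e p))) p := by
    rw [hHeq]
    exact (h2.sub h1).neg
  refine ⟨h3.differentiableAt, fun ν => ?_⟩
  rw [h3.fderiv]
  simp [hright p]
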